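/- Let S be a commutative ring with an ideal n and with 4S = 0. Let m be a positive integer, let C = ⟨u | u^(2^m) = 1⟩ be the cyclic group of order 2^m, and set U = u − 1 in the group algebra SC. Then for each non-negative integer k, Δ(SC : n)^k = ⨁_{0 ≤ i < 2^(m−1)} n^(k−i)·U^i ⊕ ⨁_{2^(m−1) ≤ i < 2^m} (n^(k−i) + 2·n^(k−i−2^(m−1)))·U^i, where by convention n^j = S for j ≤ 0, and the U^i (0 ≤ i < 2^m) form an S-module basis of SC realizing the direct sum. -/

import Mathlib

/-- The augmentation map `ε : SG → S`, sending `Σ α_g g` to `Σ α_g`. -/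
noncomputable def aug (S : Type) [CommRing S] (G : Type) [Group G] :
    MonoidAlgebra S G →ₐ[S] S := MonoidAlgebra.lift S S G 1

/-- The relative augmentation ideal `Δ(SG : n) = ε⁻¹(n) = {x ∈ SG : ε(x) ∈ n}`. -/
noncomputable def relAugIdeal (S : Type) [CommRing S] (nn : Ideal S) (G : Type) [Group G] :
    Ideal (MonoidAlgebra S G) := Ideal.comap (aug S G) nn

/-- The element `U = u - 1` of `SC` where `u` generates the cyclic group `C` of
order `2^m` (realized as `Multiplicative (ZMod (2^m))`). -/
noncomputable def Ucyc (S : Type) [CommRing S] (m : ℕ) :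
    MonoidAlgebra S (Multiplicative (ZMod (2 ^ m))) :=
  MonoidAlgebra.of S (Multiplicative (ZMod (2 ^ m))) (Multiplicative.ofAdd 1) - 1


/-!
Since `U` generates `SC` as an `S`-algebra and `ε(U) = 0`, the relative augmentation ideal is
`n·SC + U·SC`, and so `Δ(SC : n)^k` is the `S`-span of the products `a U^s` with `a ∈ n^(k-s)`,
over all `s`. In `SC` we have `(U + 1)^(2^m) = 1`; as `4 = 0`, expanding gives
`U^(2^m) = 2 U^(2^(m-1))`. Hence `2 U^i = U^(i + 2^(m-1))` for `i ≥ 2^(m-1)` and `U^s = 0` for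
`s ≥ 3·2^(m-1)`, and folding the powers `U^s` with `s ≥ 2^m` back onto `U^(s - 2^(m-1))`
produces the extra coefficients `2·n^(k-i-2^(m-1))`. Finally the `2^m` powers `U^i` span the free
`S`-module `SC` of rank `2^m`, so they are linearly independent.
-/

open Polynomial

section PowRelation

variable {A : Type*} [Semiring A] {U : A} {H : ℕ}

lemma pow_add_eq_two_mul (hrel : U ^ (2 * H) = 2 * U ^ H) {i : ℕ} (hi : H ≤ i) :
    U ^ (i + H) = 2 * U ^ i := by
  calc U ^ (i + H) = U ^ (2 * H) * U ^ (i - H) := by rw [← pow_add]; congr 1; omega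
    _ = 2 * U ^ i := by rw [hrel, mul_assoc, ← pow_add, Nat.add_sub_cancel' hi]

lemma pow_eq_zero_of_three_mul_le (h4 : (4 : A) = 0) (hrel : U ^ (2 * H) = 2 * U ^ H)
    {s : ℕ} (hs : 3 * H ≤ s) : U ^ s = 0 := by
  obtain ⟨t, rfl⟩ : ∃ t, s = t + H + H := ⟨s - 2 * H, by omega⟩
  rw [pow_add_eq_two_mul hrel (by omega), pow_add_eq_two_mul hrel (by omega), ← mul_assoc,
    show (2 : A) * 2 = 4 by norm_num, h4, zero_mul]

end PowRelation

lemma add_one_pow_two_pow_succ {A : Type*} [CommRing A] (h4 : (4 : A) = 0) (x : A) (j : ℕ) :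
    (x + 1) ^ 2 ^ (j + 1) = x ^ 2 ^ (j + 1) + 2 * x ^ 2 ^ j + 1 := by
  induction j with
  | zero => ring
  | succ j ih =>
    rw [pow_succ 2 (j + 1), pow_mul, pow_mul x, ih]
    linear_combination (x ^ 2 ^ j * x ^ 2 ^ j + x ^ 2 ^ (j + 1) * x ^ 2 ^ j + x ^ 2 ^ j) * h4

lemma Submodule.smul_span_singleton_le_iff {R M : Type*} [CommRing R] [AddCommGroup M]
    [Module R M] {I : Ideal R} {x : M} {P : Submodule R M} :
    I • Submodule.span R {x} ≤ P ↔ ∀ a ∈ I, a • x ∈ P := by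
  refine ⟨fun h a ha => h (Submodule.smul_mem_smul ha (Submodule.mem_span_singleton_self x)),
    fun h y hy => ?_⟩
  obtain ⟨a, ha, rfl⟩ := Submodule.mem_smul_span_singleton.1 hy
  exact h a ha

section MixedFiltration

variable {S A : Type*} [CommRing S] [CommRing A] [Algebra S A]

/-- `Σ_s n^(k-s) U^s`; truncated subtraction gives the convention `n^j = S` for `j ≤ 0`. -/
noncomputable def mixedFiltration (n : Ideal S) (U : A) (k : ℕ) : Submodule S A :=
  ⨆ s : ℕ, n ^ (k - s) • Submodule.span S {U ^ s}

variable {n : Ideal S} {U : A}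

lemma smul_pow_mem_mixedFiltration {k s : ℕ} {a : S} (ha : a ∈ n ^ (k - s)) :
    a • U ^ s ∈ mixedFiltration n U k :=
  Submodule.mem_iSup_of_mem s (Submodule.smul_mem_smul ha (Submodule.mem_span_singleton_self _))

lemma mixedFiltration_le_iff {k : ℕ} {P : Submodule S A} :
    mixedFiltration n U k ≤ P ↔ ∀ s, ∀ a ∈ n ^ (k - s), a • U ^ s ∈ P := by
  simp only [mixedFiltration, iSup_le_iff, Submodule.smul_span_singleton_le_iff]

lemma mixedFiltration_mul_le (k l : ℕ) :
    mixedFiltration n U k * mixedFiltration n U l ≤ mixedFiltration n U (k + l) := by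
  rw [mixedFiltration, Submodule.iSup_mul, iSup_le_iff]
  intro t
  rw [mixedFiltration, Submodule.mul_iSup, iSup_le_iff]
  intro s
  refine Submodule.mul_le.2 fun x hx y hy => ?_
  obtain ⟨a, ha, rfl⟩ := Submodule.mem_smul_span_singleton.1 hx
  obtain ⟨b, hb, rfl⟩ := Submodule.mem_smul_span_singleton.1 hy
  rw [smul_mul_smul_comm, ← pow_add]
  refine smul_pow_mem_mixedFiltration
    (Ideal.pow_le_pow_right (by omega : k + l - (t + s) ≤ k - t + (l - s)) ?_)
  rw [pow_add]
  exact Ideal.mul_mem_mul ha hb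

lemma mixedFiltration_zero (hspan : Submodule.span S (Set.range (U ^ ·)) = ⊤) :
    mixedFiltration n U 0 = ⊤ := by
  rw [eq_top_iff, ← hspan, Submodule.span_le]
  rintro _ ⟨s, rfl⟩
  simpa using smul_pow_mem_mixedFiltration (n := n) (U := U) (k := 0) (s := s) (a := 1) (by simp)

lemma mul_mem_mixedFiltration (hspan : Submodule.span S (Set.range (U ^ ·)) = ⊤) {k : ℕ}
    (y : A) {x : A} (hx : x ∈ mixedFiltration n U k) : y * x ∈ mixedFiltration n U k := by
  simpa using mixedFiltration_mul_le 0 k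
    (Submodule.mul_mem_mul (by rw [mixedFiltration_zero hspan]; trivial) hx)

lemma restrictScalars_map_sup_span_le_mixedFiltration_one
    (hspan : Submodule.span S (Set.range (U ^ ·)) = ⊤) :
    (Ideal.map (algebraMap S A) n ⊔ Ideal.span {U}).restrictScalars S
      ≤ mixedFiltration n U 1 := by
  intro x hx
  obtain ⟨y, hy, z, hz, rfl⟩ := Submodule.mem_sup.1 hx
  refine add_mem ?_ ?_
  · rw [← Submodule.restrictScalars_mem S, ← Ideal.smul_top_eq_map] at hy
    refine Submodule.smul_le.2 (fun a ha t _ => ?_) hy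
    have h : a • t = t * a • U ^ 0 := by rw [pow_zero, mul_smul_comm, mul_one]
    rw [h]
    exact mul_mem_mixedFiltration hspan t (smul_pow_mem_mixedFiltration (by simpa using ha))
  · obtain ⟨c, rfl⟩ := Ideal.mem_span_singleton'.1 hz
    have h : c * U = c * (1 : S) • U ^ 1 := by rw [one_smul, pow_one]
    rw [h]
    exact mul_mem_mixedFiltration hspan c (smul_pow_mem_mixedFiltration (by simp))

theorem restrictScalars_map_sup_span_pow (hspan : Submodule.span S (Set.range (U ^ ·)) = ⊤)
    (k : ℕ) :
    ((Ideal.map (algebraMap S A) n ⊔ Ideal.span {U}) ^ k).restrictScalars S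
      = mixedFiltration n U k := by
  set Δ := Ideal.map (algebraMap S A) n ⊔ Ideal.span {U}
  refine le_antisymm ?_ (mixedFiltration_le_iff.2 fun s a ha => ?_)
  · induction k with
    | zero => simp [mixedFiltration_zero hspan]
    | succ k ih =>
      rw [pow_succ, Ideal.restrictScalars_mul]
      exact (mul_le_mul' ih (restrictScalars_map_sup_span_le_mixedFiltration_one hspan)).trans
        (mixedFiltration_mul_le k 1)
  · have ha' : algebraMap S A a ∈ Δ ^ (k - s) := by
      refine Ideal.pow_right_mono le_sup_left _ ?_
      rw [← Ideal.map_pow]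
      exact Ideal.mem_map_of_mem _ ha
    have hUs : U ^ s ∈ Δ ^ s :=
      Ideal.pow_mem_pow (Ideal.mem_sup_right (Ideal.mem_span_singleton_self U)) s
    rw [Submodule.restrictScalars_mem, Algebra.smul_def]
    exact Ideal.pow_le_pow_right (by omega : k ≤ k - s + s)
      (pow_add Δ _ _ ▸ Ideal.mul_mem_mul ha' hUs)

theorem Ideal.comap_eq_map_sup_span_singleton
    (hspan : Submodule.span S (Set.range (U ^ ·)) = ⊤)
    (f : A →ₐ[S] S) (hf : f U = 0) (n : Ideal S) :
    n.comap f = n.map (algebraMap S A) ⊔ Ideal.span {U} := by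
  have hsub : ∀ x, x - algebraMap S A (f x) ∈ Ideal.span {U} := by
    intro x
    obtain ⟨p, rfl⟩ : x ∈ LinearMap.range (aeval U).toLinearMap := by
      refine (hspan.symm.le.trans (Submodule.span_le.2 ?_)) Submodule.mem_top
      rintro _ ⟨s, rfl⟩
      exact ⟨X ^ s, by simp⟩
    obtain ⟨q, hq⟩ := X_dvd_sub_C (p := p)
    have hfp : f (aeval U p) = p.coeff 0 := by
      rw [← aeval_algHom_apply, hf, coeff_zero_eq_aeval_zero]
    rw [AlgHom.toLinearMap_apply, hfp, ← aeval_C, ← map_sub, hq, map_mul, aeval_X]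
    exact Ideal.mul_mem_right _ _ (Ideal.mem_span_singleton_self U)
  refine le_antisymm (fun x hx => ?_) (sup_le ?_ ?_)
  · rw [← add_sub_cancel (algebraMap S A (f x)) x]
    exact Submodule.add_mem_sup (Ideal.mem_map_of_mem _ hx) (hsub x)
  · exact Ideal.map_le_iff_le_comap.2 fun a ha => by simpa using ha
  · rw [Ideal.span_le, Set.singleton_subset_iff]
    simp [hf]

theorem mixedFiltration_eq_sum (h4 : (4 : A) = 0) {N H : ℕ} (hN : N = 2 * H)
    (hrel : U ^ (2 * H) = 2 * U ^ H) (k : ℕ) :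
    mixedFiltration n U k = ∑ i ∈ Finset.range N,
      (if i < H then n ^ (k - i) else n ^ (k - i) + Ideal.span {(2 : S)} * n ^ (k - i - H))
        • Submodule.span S {U ^ i} := by
  subst hN
  set c : ℕ → Ideal S := fun i =>
    if i < H then n ^ (k - i) else n ^ (k - i) + Ideal.span {(2 : S)} * n ^ (k - i - H)
  have hterm : ∀ i < 2 * H, ∀ a ∈ c i,
      a • U ^ i ∈ ∑ i ∈ Finset.range (2 * H), c i • Submodule.span S {U ^ i} :=
    fun i hi a ha => Finset.single_le_sum (f := fun i => c i • Submodule.span S {U ^ i})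
      (fun _ _ => bot_le) (Finset.mem_range.2 hi)
      (Submodule.smul_mem_smul ha (Submodule.mem_span_singleton_self _))
  have htwo : ∀ (a : S) (i : ℕ), a • (2 * U ^ i) = (2 * a) • U ^ i := by
    intro a i
    rw [two_mul, two_mul, smul_add, add_smul]
  -- a finite sum of submodules is definitionally their `Finset.sup`
  refine le_antisymm (mixedFiltration_le_iff.2 fun s a ha => ?_)
    (Finset.sup_le fun i _ => Submodule.smul_span_singleton_le_iff.2 fun a ha => ?_)
  · rcases lt_or_ge s (2 * H) with hs | hs
    · refine hterm s hs a ?_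
      dsimp only [c]
      split_ifs
      exacts [ha, Submodule.mem_sup_left ha]
    rcases lt_or_ge s (3 * H) with hs' | hs'
    · obtain ⟨i, rfl⟩ : ∃ i, s = i + H := ⟨s - H, by omega⟩
      rw [pow_add_eq_two_mul hrel (by omega), htwo]
      refine hterm i (by omega) _ ?_
      dsimp only [c]
      rw [if_neg (by omega)]
      refine Submodule.mem_sup_right (Ideal.mul_mem_mul (Ideal.mem_span_singleton_self 2) ?_)
      rwa [Nat.sub_sub]
    · rw [pow_eq_zero_of_three_mul_le h4 hrel hs', smul_zero]
      exact zero_mem _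
  · split_ifs at ha with hiH
    · exact smul_pow_mem_mixedFiltration ha
    obtain ⟨b, hb, d, hd, rfl⟩ := Submodule.mem_sup.1 ha
    obtain ⟨z, hz, rfl⟩ := Ideal.mem_span_singleton_mul.1 hd
    rw [add_smul, ← htwo, ← pow_add_eq_two_mul hrel (by omega)]
    refine add_mem (smul_pow_mem_mixedFiltration hb) (smul_pow_mem_mixedFiltration ?_)
    rwa [← Nat.sub_sub]

end MixedFiltration

section CyclicGroupAlgebra

variable (S : Type) [CommRing S] (m : ℕ)

lemma of_eq_Ucyc_add_one_pow (g : Multiplicative (ZMod (2 ^ m))) :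
    MonoidAlgebra.of S _ g = (Ucyc S m + 1) ^ g.toAdd.val := by
  rw [Ucyc, sub_add_cancel, ← map_pow, ← ofAdd_nsmul]
  simp

lemma Ucyc_add_one_pow_two_pow : (Ucyc S m + 1) ^ 2 ^ m = 1 := by
  rw [Ucyc, sub_add_cancel, ← map_pow, ← ofAdd_nsmul]
  simp [MonoidAlgebra.one_def]

lemma Ucyc_pow_two_pow (h4 : (4 : MonoidAlgebra S (Multiplicative (ZMod (2 ^ m)))) = 0)
    (hm : 0 < m) : Ucyc S m ^ (2 * 2 ^ (m - 1)) = 2 * Ucyc S m ^ 2 ^ (m - 1) := by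
  obtain ⟨j, rfl⟩ : ∃ j, m = j + 1 := ⟨m - 1, by omega⟩
  have h := add_one_pow_two_pow_succ h4 (Ucyc S (j + 1)) j
  rw [Ucyc_add_one_pow_two_pow] at h
  rw [Nat.add_sub_cancel, ← pow_succ']
  linear_combination -h - Ucyc S (j + 1) ^ 2 ^ j * h4

lemma span_Ucyc_pow_eq_top :
    Submodule.span S (Set.range fun i : Fin (2 ^ m) => Ucyc S m ^ (i : ℕ)) = ⊤ := by
  refine eq_top_iff.2 fun x _ => x.induction_on (fun g => ?_) (fun _ _ => add_mem)
    (fun a _ h => Submodule.smul_mem _ a h)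
  rw [of_eq_Ucyc_add_one_pow, add_pow]
  refine Submodule.sum_mem _ fun l hl => ?_
  rw [one_pow, mul_one, ← nsmul_eq_mul']
  have hl : l < 2 ^ m := (Finset.mem_range_succ_iff.1 hl).trans_lt (ZMod.val_lt _)
  exact Submodule.smul_of_tower_mem _ _ (Submodule.subset_span ⟨⟨l, hl⟩, rfl⟩)

lemma span_range_Ucyc_pow_eq_top : Submodule.span S (Set.range (Ucyc S m ^ ·)) = ⊤ :=
  eq_top_iff.2 <| (span_Ucyc_pow_eq_top S m).ge.trans <|
    Submodule.span_mono <| Set.range_subset_iff.2 fun i => ⟨i, rfl⟩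

lemma linearIndependent_Ucyc_pow :
    LinearIndependent S (fun i : Fin (2 ^ m) => Ucyc S m ^ (i : ℕ)) := by
  rcases subsingleton_or_nontrivial S with _ | _
  · exact linearIndependent_of_subsingleton
  refine linearIndependent_of_top_le_span_of_card_eq_finrank (span_Ucyc_pow_eq_top S m).ge ?_
  simp [Module.finrank_eq_card_basis (MonoidAlgebra.basis _ S), ZMod.card]

lemma aug_Ucyc : aug S _ (Ucyc S m) = 0 := by
  simp [aug, Ucyc]

end CyclicGroupAlgebra

theorem stmt11 (S : Type) [CommRing S] (h4 : (4 : S) = 0) (nn : Ideal S)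
    (m : ℕ) (hm : 0 < m) (k : ℕ) :
    (Submodule.restrictScalars S (relAugIdeal S nn (Multiplicative (ZMod (2 ^ m))) ^ k)
      = ∑ i ∈ Finset.range (2 ^ m),
          (if i < 2 ^ (m - 1) then nn ^ (k - i)
            else nn ^ (k - i) + Ideal.span {(2 : S)} * nn ^ (k - i - 2 ^ (m - 1)))
            • Submodule.span S {Ucyc S m ^ i})
    ∧ LinearIndependent S (fun i : Fin (2 ^ m) => Ucyc S m ^ (i : ℕ)) := by
  have h4' : (4 : MonoidAlgebra S (Multiplicative (ZMod (2 ^ m)))) = 0 := by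
    rw [← map_ofNat (algebraMap S _) 4, h4, map_zero]
  have hspan := span_range_Ucyc_pow_eq_top S m
  refine ⟨?_, linearIndependent_Ucyc_pow S m⟩
  rw [relAugIdeal, Ideal.comap_eq_map_sup_span_singleton hspan _ (aug_Ucyc S m),
    restrictScalars_map_sup_span_pow hspan]
  exact mixedFiltration_eq_sum h4' (by rw [← pow_succ', Nat.sub_add_cancel hm])
    (Ucyc_pow_two_pow S m h4' hm) k
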